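/- arXiv:1411.2785 — 6 statements merged into one kernel-verified Lean document; each statement's English description precedes it below -/
import Mathlib

section
/- Let k be a natural number, u = 2^k, and let P be a nonempty finite set of points in [0,u) × [0,u) (integer coordinates). Suppose P can be covered by c sets C_1, ..., C_c (not necessarily disjoint), where each C_i is contained in some axis-aligned square of side ℓ_i with 1 ≤ ℓ_i ≤ u (i.e., C_i ⊆ [a_i, a_i + ℓ_i) × [b_i, b_i + ℓ_i) for some integers a_i, b_i). Then the quadtree node count of P is at most Σ_{i=1}^{c} ( |C_i| · ⌈log₂ ℓ_i⌉ + 4·(k+1) ). -/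
/-- The quadtree node count of a finite point set `P` on a `2^k × 2^k` grid:
the number of triples `(d, i, j)` with `d ≤ k` such that `(i, j)` is the
depth-`d` dyadic square containing some point of `P`. -/
def quadNodes (k : ℕ) (P : Finset (ℕ × ℕ)) : ℕ :=
  ((Finset.range (k + 1)).biUnion fun d =>
    P.image fun p => (d, p.1 / 2 ^ (k - d), p.2 / 2 ^ (k - d))).card

/-!
A cluster inside an `ℓ × ℓ` square meets at most `4` dyadic squares of each side `s ≥ ℓ`
(two consecutive intervals per coordinate), and there are `k + 1` depths in total. The depths
whose squares have side `< ℓ` are the last `⌈log₂ ℓ⌉` ones, and there each point of the cluster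
contributes at most one node. Summing over a cover bounds the node count of `P`.
-/

open Finset

lemma div_mem_Icc_of_mem_Ico {a : ℤ} {x ℓ s : ℕ} (hs : 0 < s) (hℓs : ℓ ≤ s)
    (hax : a ≤ x) (hxa : (x : ℤ) < a + ℓ) :
    x / s ∈ Icc (a.toNat / s) (a.toNat / s + 1) := by
  have hlow : a.toNat ≤ x := Int.toNat_le.mpr hax
  have hhigh : x ≤ a.toNat + s := by have := Int.self_le_toNat a; omega
  refine mem_Icc.mpr ⟨Nat.div_le_div_right hlow, ?_⟩
  simpa only [Nat.add_div_right _ hs] using Nat.div_le_div_right (c := s) hhigh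

lemma card_image_div_le_four {S : Finset (ℕ × ℕ)} {ℓ s : ℕ} {a b : ℤ} (d : ℕ)
    (hs : 0 < s) (hℓs : ℓ ≤ s)
    (hsq : ∀ p ∈ S, a ≤ (p.1 : ℤ) ∧ (p.1 : ℤ) < a + ℓ ∧ b ≤ (p.2 : ℤ) ∧ (p.2 : ℤ) < b + ℓ) :
    (S.image fun p => (d, p.1 / s, p.2 / s)).card ≤ 4 := by
  have hsub : S.image (fun p => (d, p.1 / s, p.2 / s)) ⊆
      {d} ×ˢ (Icc (a.toNat / s) (a.toNat / s + 1) ×ˢ Icc (b.toNat / s) (b.toNat / s + 1)) := by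
    intro x hx
    obtain ⟨p, hp, rfl⟩ := mem_image.mp hx
    obtain ⟨h1, h2, h3, h4⟩ := hsq p hp
    simp only [mem_product, mem_singleton, true_and]
    exact ⟨div_mem_Icc_of_mem_Ico hs hℓs h1 h2, div_mem_Icc_of_mem_Ico hs hℓs h3 h4⟩
  refine (card_le_card hsub).trans_eq ?_
  simp [add_assoc]

lemma card_filter_two_pow_sub_lt_le_clog (k ℓ : ℕ) :
    ((range (k + 1)).filter fun d => 2 ^ (k - d) < ℓ).card ≤ Nat.clog 2 ℓ := by
  refine (card_le_card (t := Ico (k + 1 - Nat.clog 2 ℓ) (k + 1)) ?_).trans (by simp; omega)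
  intro d hd
  rw [mem_filter, mem_range, ← Nat.lt_clog_iff_pow_lt one_lt_two] at hd
  rw [mem_Ico]
  omega

lemma quadNodes_le_of_subset_square (k : ℕ) {S : Finset (ℕ × ℕ)} {ℓ : ℕ} {a b : ℤ}
    (hsq : ∀ p ∈ S, a ≤ (p.1 : ℤ) ∧ (p.1 : ℤ) < a + ℓ ∧ b ≤ (p.2 : ℤ) ∧ (p.2 : ℤ) < b + ℓ) :
    quadNodes k S ≤ S.card * Nat.clog 2 ℓ + 4 * (k + 1) := by
  have hdepth : ∀ d ∈ range (k + 1),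
      (S.image fun p => (d, p.1 / 2 ^ (k - d), p.2 / 2 ^ (k - d))).card
        ≤ if 2 ^ (k - d) < ℓ then S.card else 4 := by
    intro d _
    split_ifs with h
    · exact card_image_le
    · exact card_image_div_le_four d (Nat.two_pow_pos _) (not_lt.mp h) hsq
  calc quadNodes k S
      ≤ ∑ d ∈ range (k + 1), if 2 ^ (k - d) < ℓ then S.card else 4 :=
        card_biUnion_le.trans (sum_le_sum hdepth)
    _ = ((range (k + 1)).filter fun d => 2 ^ (k - d) < ℓ).card * S.card
          + ((range (k + 1)).filter fun d => ¬ 2 ^ (k - d) < ℓ).card * 4 := by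
        rw [sum_ite, sum_const, sum_const, smul_eq_mul, smul_eq_mul]
    _ ≤ Nat.clog 2 ℓ * S.card + (k + 1) * 4 := by
        gcongr
        · exact card_filter_two_pow_sub_lt_le_clog k ℓ
        · exact (card_filter_le _ _).trans (card_range _).le
    _ = S.card * Nat.clog 2 ℓ + 4 * (k + 1) := by ring

lemma quadNodes_le_sum_of_subset_biUnion {ι : Type*} (k : ℕ) {P : Finset (ℕ × ℕ)}
    {s : Finset ι} {C : ι → Finset (ℕ × ℕ)} (hP : P ⊆ s.biUnion C) :
    quadNodes k P ≤ ∑ i ∈ s, quadNodes k (C i) := by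
  refine (card_le_card ?_).trans card_biUnion_le
  intro x hx
  simp only [mem_biUnion, mem_image] at hx ⊢
  obtain ⟨d, hd, p, hp, rfl⟩ := hx
  obtain ⟨i, hi, hpi⟩ := mem_biUnion.mp (hP hp)
  exact ⟨i, hi, d, hd, p, hpi, rfl⟩

theorem quadtree_space_bound_general (k : ℕ)
    (P : Finset (ℕ × ℕ))
    (c : ℕ) (C : Fin c → Finset (ℕ × ℕ)) (ℓ : Fin c → ℕ) (a b : Fin c → ℤ)
    (hcover : ∀ p ∈ P, ∃ i, p ∈ C i)
    (hsq : ∀ i, ∀ p ∈ C i,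
      a i ≤ (p.1 : ℤ) ∧ (p.1 : ℤ) < a i + ℓ i ∧
      b i ≤ (p.2 : ℤ) ∧ (p.2 : ℤ) < b i + ℓ i) :
    quadNodes k P ≤ ∑ i, ((C i).card * Nat.clog 2 (ℓ i) + 4 * (k + 1)) := by
  have hPC : P ⊆ univ.biUnion C := fun p hp => by
    obtain ⟨i, hi⟩ := hcover p hp
    exact mem_biUnion.mpr ⟨i, mem_univ i, hi⟩
  calc quadNodes k P ≤ ∑ i, quadNodes k (C i) := quadNodes_le_sum_of_subset_biUnion k hPC
    _ ≤ _ := sum_le_sum fun i _ => quadNodes_le_of_subset_square k (hsq i)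

theorem quadtree_space_bound (k : ℕ) (u : ℕ) (hu : u = 2 ^ k)
    (P : Finset (ℕ × ℕ)) (hP : P.Nonempty)
    (hPgrid : ∀ p ∈ P, p.1 < u ∧ p.2 < u)
    (c : ℕ) (C : Fin c → Finset (ℕ × ℕ)) (ℓ : Fin c → ℕ) (a b : Fin c → ℤ)
    (hℓ : ∀ i, 1 ≤ ℓ i ∧ ℓ i ≤ u)
    (hCP : ∀ i, C i ⊆ P)
    (hcover : ∀ p ∈ P, ∃ i, p ∈ C i)
    (hsq : ∀ i, ∀ p ∈ C i,
      a i ≤ (p.1 : ℤ) ∧ (p.1 : ℤ) < a i + ℓ i ∧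
      b i ≤ (p.2 : ℤ) ∧ (p.2 : ℤ) < b i + ℓ i) :
    quadNodes k P ≤ ∑ i, ((C i).card * Nat.clog 2 (ℓ i) + 4 * (k + 1)) :=
  quadtree_space_bound_general k P c C ℓ a b hcover hsq
end

section
/- Let k be a natural number, u = 2^k, and let S = [a, a+ℓ) × [b, b+ℓ) ⊆ [0,u)² be an axis-aligned integer square with 1 ≤ ℓ ≤ u. Let d ≤ k satisfy 2^{k−d} ≥ ℓ. Then every depth-d dyadic square that contains a point of S also contains one of the four corner points (a,b), (a+ℓ−1,b), (a,b+ℓ−1), (a+ℓ−1,b+ℓ−1) of S. Consequently, at each such depth d there are at most four dyadic squares containing points of S. -/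
lemma two_vals_div (m a ℓ x : ℕ) (hℓ : 1 ≤ ℓ) (hm : ℓ ≤ m)
    (hax : a ≤ x) (hx : x < a + ℓ) :
    x / m = a / m ∨ x / m = (a + ℓ - 1) / m := by
  have hm0 : 0 < m := lt_of_lt_of_le hℓ hm
  have h1 : a / m ≤ x / m := Nat.div_le_div_right hax
  have h2 : x / m ≤ (a + ℓ - 1) / m := Nat.div_le_div_right (by omega)
  have h3 : (a + ℓ - 1) / m ≤ (a + m) / m := Nat.div_le_div_right (by omega)
  rw [Nat.add_div_right _ hm0] at h3
  omega

theorem shallow_square_corners (k : ℕ) (u : ℕ) (hu : u = 2 ^ k)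
    (ℓ : ℕ) (hℓ1 : 1 ≤ ℓ) (hℓu : ℓ ≤ u)
    (a b : ℕ) (ha : a + ℓ ≤ u) (hb : b + ℓ ≤ u)
    (d : ℕ) (hd : d ≤ k) (hside : ℓ ≤ 2 ^ (k - d)) :
    (∀ x y : ℕ, (a ≤ x ∧ x < a + ℓ ∧ b ≤ y ∧ y < b + ℓ) →
      ∃ cx cy : ℕ,
        ((cx, cy) = (a, b) ∨ (cx, cy) = (a + ℓ - 1, b) ∨
         (cx, cy) = (a, b + ℓ - 1) ∨ (cx, cy) = (a + ℓ - 1, b + ℓ - 1)) ∧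
        cx / 2 ^ (k - d) = x / 2 ^ (k - d) ∧ cy / 2 ^ (k - d) = y / 2 ^ (k - d)) ∧
    (((Finset.Ico a (a + ℓ)) ×ˢ (Finset.Ico b (b + ℓ))).image
        (fun p => (p.1 / 2 ^ (k - d), p.2 / 2 ^ (k - d)))).card ≤ 4 := by
  set m := 2 ^ (k - d) with hm
  constructor
  · rintro x y ⟨h1, h2, h3, h4⟩
    rcases two_vals_div m a ℓ x hℓ1 hside h1 h2 with hx | hx <;>
      rcases two_vals_div m b ℓ y hℓ1 hside h3 h4 with hy | hy
    · exact ⟨a, b, Or.inl rfl, hx.symm, hy.symm⟩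
    · exact ⟨a, b + ℓ - 1, Or.inr (Or.inr (Or.inl rfl)), hx.symm, hy.symm⟩
    · exact ⟨a + ℓ - 1, b, Or.inr (Or.inl rfl), hx.symm, hy.symm⟩
    · exact ⟨a + ℓ - 1, b + ℓ - 1, Or.inr (Or.inr (Or.inr rfl)), hx.symm, hy.symm⟩
  · have hsub : (((Finset.Ico a (a + ℓ)) ×ˢ (Finset.Ico b (b + ℓ))).image
        (fun p => (p.1 / m, p.2 / m))) ⊆
        ({(a / m, b / m), ((a + ℓ - 1) / m, b / m), (a / m, (b + ℓ - 1) / m),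
          ((a + ℓ - 1) / m, (b + ℓ - 1) / m)} : Finset (ℕ × ℕ)) := by
      intro p hp
      simp only [Finset.mem_image, Finset.mem_product, Finset.mem_Ico] at hp
      obtain ⟨⟨x, y⟩, ⟨⟨h1, h2⟩, ⟨h3, h4⟩⟩, rfl⟩ := hp
      rcases two_vals_div m a ℓ x hℓ1 hside h1 h2 with hx | hx <;>
        rcases two_vals_div m b ℓ y hℓ1 hside h3 h4 with hy | hy <;>
        simp [hx, hy]
    calc _ ≤ _ := Finset.card_le_card hsub
      _ ≤ 4 := by
        apply le_trans (Finset.card_insert_le _ _)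
        apply le_trans (Nat.add_le_add_right (Finset.card_insert_le _ _) 1)
        apply le_trans (Nat.add_le_add_right (Nat.add_le_add_right (Finset.card_insert_le _ _) 1) 1)
        simp
end

section
/- Let k be a natural number and let (x,y), (x',y') be points with 0 ≤ x, y, x', y' < 2^k. For every d ≤ k: ⌊M_k(x,y) / 4^{k−d}⌋ = ⌊M_k(x',y') / 4^{k−d}⌋ if and only if ⌊x / 2^{k−d}⌋ = ⌊x' / 2^{k−d}⌋ and ⌊y / 2^{k−d}⌋ = ⌊y' / 2^{k−d}⌋. That is, two points lie in the same depth-d dyadic square of the 2^k × 2^k grid exactly when their Morton codes share the same length-2d prefix of binary digits. -/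
/-- The Morton (Z-order) interleaving map: interleaves the low `k` bits of
`x` (into even positions) and `y` (into odd positions). -/
def morton (k : ℕ) (x y : ℕ) : ℕ :=
  ∑ i ∈ Finset.range k,
    ((x / 2 ^ i % 2) * 2 ^ (2 * i) + (y / 2 ^ i % 2) * 2 ^ (2 * i + 1))

lemma morton_lt (m x y : ℕ) : morton m x y < 4 ^ m := by
  induction m with
  | zero => simp [morton]
  | succ n ih =>
    rw [morton, Finset.sum_range_succ, ← morton]
    have h1 : x / 2 ^ n % 2 ≤ 1 := by omega
    have h2 : y / 2 ^ n % 2 ≤ 1 := by omega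
    have e1 : (2 : ℕ) ^ (2 * n) = 4 ^ n := by rw [pow_mul]; norm_num
    have e2 : (2 : ℕ) ^ (2 * n + 1) = 2 * 4 ^ n := by rw [pow_succ, e1]; ring
    have : x / 2 ^ n % 2 * 2 ^ (2 * n) + y / 2 ^ n % 2 * 2 ^ (2 * n + 1) ≤ 3 * 4 ^ n := by
      rw [e1, e2]; nlinarith
    have e3 : (4 : ℕ) ^ (n + 1) = 4 * 4 ^ n := by ring
    omega

lemma morton_split (m k x y : ℕ) (h : m ≤ k) :
    morton k x y = morton m x y + 4 ^ m * morton (k - m) (x / 2 ^ m) (y / 2 ^ m) := by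
  obtain ⟨n, rfl⟩ := Nat.exists_eq_add_of_le h
  rw [Nat.add_sub_cancel_left]
  unfold morton
  rw [Finset.sum_range_add, Finset.mul_sum]
  congr 1
  refine Finset.sum_congr rfl fun j _ => ?_
  have hx : x / 2 ^ (m + j) = x / 2 ^ m / 2 ^ j := by
    rw [Nat.div_div_eq_div_mul, ← pow_add]
  have hy : y / 2 ^ (m + j) = y / 2 ^ m / 2 ^ j := by
    rw [Nat.div_div_eq_div_mul, ← pow_add]
  have e1 : (2 : ℕ) ^ (2 * (m + j)) = 4 ^ m * 2 ^ (2 * j) := by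
    rw [mul_add, pow_add, pow_mul]; norm_num
  have e2 : (2 : ℕ) ^ (2 * (m + j) + 1) = 4 ^ m * 2 ^ (2 * j + 1) := by
    rw [show 2 * (m + j) + 1 = 2 * m + (2 * j + 1) by ring, pow_add, pow_mul]; norm_num
  rw [hx, hy, e1, e2]; ring

lemma morton_one (u v : ℕ) : morton 1 u v = u % 2 + 2 * (v % 2) := by
  simp [morton]; ring

lemma morton_inj (n : ℕ) : ∀ a b a' b', a < 2 ^ n → b < 2 ^ n → a' < 2 ^ n → b' < 2 ^ n →
    morton n a b = morton n a' b' → a = a' ∧ b = b' := by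
  induction n with
  | zero => intro a b a' b' ha hb ha' hb' _; omega
  | succ n ih =>
    intro a b a' b' ha hb ha' hb' h
    have key : ∀ u v : ℕ, morton (n + 1) u v = (u % 2 + 2 * (v % 2)) + 4 * morton n (u / 2) (v / 2) := by
      intro u v
      have := morton_split 1 (n + 1) u v (by omega)
      simpa [morton_one] using this
    rw [key, key] at h
    have hM := morton_lt n (a / 2) (b / 2)
    have hM' := morton_lt n (a' / 2) (b' / 2)
    have hlow : a % 2 = a' % 2 ∧ b % 2 = b' % 2 ∧
        morton n (a / 2) (b / 2) = morton n (a' / 2) (b' / 2) := by omega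
    have hp : (2 : ℕ) ^ (n + 1) = 2 * 2 ^ n := by ring
    have := ih (a / 2) (b / 2) (a' / 2) (b' / 2) (by omega) (by omega) (by omega) (by omega)
      hlow.2.2
    omega

theorem morton_prefix_iff_same_dyadic_square (k d : ℕ) (hd : d ≤ k)
    (x y x' y' : ℕ) (hx : x < 2 ^ k) (hy : y < 2 ^ k)
    (hx' : x' < 2 ^ k) (hy' : y' < 2 ^ k) :
    morton k x y / 4 ^ (k - d) = morton k x' y' / 4 ^ (k - d) ↔
      (x / 2 ^ (k - d) = x' / 2 ^ (k - d) ∧ y / 2 ^ (k - d) = y' / 2 ^ (k - d)) := by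
  set m := k - d with hm
  have hkd : k - m = d := by omega
  have hdiv : ∀ u v : ℕ, morton k u v / 4 ^ m = morton d (u / 2 ^ m) (v / 2 ^ m) := by
    intro u v
    rw [morton_split m k u v (by omega), hkd,
      Nat.add_mul_div_left _ _ (by positivity : (0:ℕ) < 4 ^ m),
      Nat.div_eq_of_lt (morton_lt m u v), zero_add]
  rw [hdiv, hdiv]
  have hb : ∀ u : ℕ, u < 2 ^ k → u / 2 ^ m < 2 ^ d := by
    intro u hu
    rw [Nat.div_lt_iff_lt_mul (by positivity)]
    calc u < 2 ^ k := hu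
      _ = 2 ^ d * 2 ^ m := by rw [← pow_add]; congr 1; omega
  constructor
  · exact fun h => morton_inj d _ _ _ _ (hb x hx) (hb y hy) (hb x' hx') (hb y' hy') h
  · rintro ⟨h1, h2⟩; rw [h1, h2]
end

section
/- Let t be a binary tree (each node is either a leaf or has exactly two subtrees), and let p be any list of directions (left/right) describing a valid descent from the root of t. Then the number of steps of p at which the descent enters a child subtree c of the current node v satisfying 2 · (number of leaves of c) ≤ (number of leaves of v) is at most log₂(number of leaves of t) (i.e., at most Nat.log 2 (numLeaves t)). In particular, in a heavy-path decomposition of t — where the heavy path through a node continues into the child with at least as many leaf descendants — every root-to-leaf path consists of at most log₂(numLeaves t) + 1 initial segments of heavy paths. -/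
/-!
Each light step at least halves the number of leaves below the current node, and every
subtree has at least one leaf, so `k` light steps force `2 ^ k ≤ numLeaves t`.
-/

/-- The subtree of a binary tree reached by following a list of directions
(`false` = left, `true` = right); `none` if the descent is invalid. -/
def subtreeAt : Tree Unit → List Bool → Option (Tree Unit)
  | t, [] => some t
  | BinaryTree.nil, _ :: _ => none
  | BinaryTree.node _ l r, d :: p => subtreeAt (if d then r else l) p

/-- The number of light steps along a descent: steps from a node `v` into a
child `c` with `2 * c.numLeaves ≤ v.numLeaves`. -/
def countLight : Tree Unit → List Bool → ℕ
  | _, [] => 0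
  | BinaryTree.nil, _ :: _ => 0
  | BinaryTree.node _ l r, d :: p =>
      (if 2 * (if d then r else l).numLeaves ≤ l.numLeaves + r.numLeaves then 1 else 0)
        + countLight (if d then r else l) p

theorem Nat.log_add_one_le_of_mul_le {b a n : ℕ} (hb : 1 < b) (ha : a ≠ 0) (h : b * a ≤ n) :
    Nat.log b a + 1 ≤ Nat.log b n :=
  Nat.le_log_of_pow_le hb <| calc
    b ^ (Nat.log b a + 1) = b * b ^ Nat.log b a := Nat.pow_succ'
    _ ≤ b * a := Nat.mul_le_mul_left b (Nat.pow_log_le_self b ha)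
    _ ≤ n := h

theorem Nat.ite_mul_le_add_log_le {b a n : ℕ} (hb : 1 < b) (ha : a ≠ 0) (han : a ≤ n) :
    (if b * a ≤ n then 1 else 0) + Nat.log b a ≤ Nat.log b n := by
  split_ifs with h
  · rw [add_comm]
    exact Nat.log_add_one_le_of_mul_le hb ha h
  · simpa using Nat.log_mono_right han

theorem BinaryTree.numLeaves_child_le {α : Type*} (x : α) (l r : BinaryTree α) (d : Bool) :
    (if d then r else l).numLeaves ≤ (BinaryTree.node x l r).numLeaves := by
  cases d <;> simp [BinaryTree.numLeaves]

theorem light_steps_le_log_general (t : Tree Unit) (p : List Bool) :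
    countLight t p ≤ Nat.log 2 t.numLeaves := by
  induction p generalizing t with
  | nil => simp [countLight]
  | cons d p ih =>
    cases t with
    | nil => simp [countLight]
    | node x l r =>
      set c := if d then r else l
      calc countLight (BinaryTree.node x l r) (d :: p)
          = (if 2 * c.numLeaves ≤ l.numLeaves + r.numLeaves then 1 else 0) + countLight c p := rfl
        _ ≤ (if 2 * c.numLeaves ≤ l.numLeaves + r.numLeaves then 1 else 0)
              + Nat.log 2 c.numLeaves := Nat.add_le_add_left (ih c) _
        _ ≤ Nat.log 2 (l.numLeaves + r.numLeaves) :=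
          Nat.ite_mul_le_add_log_le one_lt_two c.numLeaves_pos.ne'
            (BinaryTree.numLeaves_child_le x l r d)

theorem light_steps_le_log (t : Tree Unit) (p : List Bool)
    (hvalid : (subtreeAt t p).isSome) :
    countLight t p ≤ Nat.log 2 t.numLeaves :=
  light_steps_le_log_general t p
end

section
/- Let t be a binary tree, let p be a valid descent from the root of t, and let q be a prefix of p, with v the node of t reached by following q. Then the number of light steps of p occurring after the prefix q (i.e., light steps within the remaining descent from v) is at most log₂(number of leaves of the subtree rooted at v) (i.e., at most Nat.log 2 (numLeaves v)). -/
/-!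
A light step from `v` into a child `c` means `2 * c.numLeaves ≤ v.numLeaves`, so it lowers
`Nat.log 2` of the leaf count by at least one; any other step does not raise it, since a child
has at most as many leaves as its parent. The leaf count of a tree is positive, so this
logarithm never drops below `0`, which bounds the number of light steps by its initial value.
-/

theorem Nat.ite_add_log_le_log {b c n : ℕ} (hb : 1 < b) (hc : c ≠ 0) (hcn : c ≤ n) :
    (if b * c ≤ n then 1 else 0) + Nat.log b c ≤ Nat.log b n := by
  split_ifs with hbc
  · calc 1 + Nat.log b c = Nat.log b (c * b) := by rw [Nat.log_mul_base hb hc, add_comm]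
      _ ≤ Nat.log b n := Nat.log_mono_right (by rwa [mul_comm])
  · simpa using Nat.log_mono_right hcn

theorem light_steps_after_prefix_le_log_general (rest : List Bool)
    (v : Tree Unit) :
    countLight v rest ≤ Nat.log 2 v.numLeaves := by
  induction rest generalizing v with
  | nil => simp [countLight]
  | cons d rest ih =>
    cases v with
    | nil => simp [countLight]
    | node _ l r =>
      set c := if d then r else l
      have hc_le : c.numLeaves ≤ l.numLeaves + r.numLeaves := by cases d <;> simp [c]
      calc countLight (.node () l r) (d :: rest)
          = (if 2 * c.numLeaves ≤ l.numLeaves + r.numLeaves then 1 else 0)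
              + countLight c rest := rfl
        _ ≤ (if 2 * c.numLeaves ≤ l.numLeaves + r.numLeaves then 1 else 0)
              + Nat.log 2 c.numLeaves := Nat.add_le_add_left (ih c) _
        _ ≤ Nat.log 2 (l.numLeaves + r.numLeaves) :=
            Nat.ite_add_log_le_log one_lt_two c.numLeaves_pos.ne' hc_le

theorem light_steps_after_prefix_le_log (t : Tree Unit) (p q rest : List Bool)
    (hp : p = q ++ rest) (hvalid : (subtreeAt t p).isSome)
    (v : Tree Unit) (hv : subtreeAt t q = some v) :
    countLight v rest ≤ Nat.log 2 v.numLeaves :=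
  light_steps_after_prefix_le_log_general rest v
end

section
/- Let k be a natural number, let P be a nonempty finite set of points in [0,2^k)², let (x,y) ∈ [0,2^k)² be a query point with (x,y) in the same depth-0 square as P (always true), and for each d ≤ k let N_d be the number of points of P lying in the depth-d dyadic square containing (x,y). Let d₀ ≤ k and let g be a natural number with g ≥ 2^{k−d₀}, and let k_g be the number of points of P at L∞ distance strictly less than g from (x,y). If k_g ≥ 1, then the number of indices d with d₀ ≤ d < k, N_{d+1} ≥ 1, and 2·N_{d+1} ≤ N_d is at most log₂ k_g (i.e., at most Nat.log 2 k_g). -/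
/-!
Dyadic squares are nested, so the counts `N d` are non-increasing in `d`, and each counted depth
at least halves the (positive) count. Hence `2 ^ #(counted depths) ≤ max (N d₀) 1`. The depth-`d₀`
square has side `2 ^ (k - d₀) ≤ g`, so all its points are within L∞ distance `< g` of `(x, y)`,
giving `N d₀ ≤ kg`.
-/

lemma Nat.div_eq_div_of_dvd_of_div_eq_div {a b m n : ℕ} (hmn : m ∣ n) (h : a / m = b / m) :
    a / n = b / n := by
  obtain ⟨c, rfl⟩ := hmn
  rw [← Nat.div_div_eq_div_mul, h, Nat.div_div_eq_div_mul]

lemma Nat.abs_sub_lt_of_div_eq_div {a b e : ℕ} (he : 0 < e) (h : a / e = b / e) :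
    |(a : ℤ) - b| < e := by
  have hsub : (a : ℤ) - b = (a % e : ℕ) - (b % e : ℕ) := by
    have ha := Nat.mod_add_div a e
    have hb := Nat.mod_add_div b e
    rw [h] at ha
    omega
  rw [hsub, abs_sub_comm]
  exact Int.abs_sub_lt_of_lt_lt (Nat.mod_lt a he) (Nat.mod_lt b he)

/-- The `max · 1` keeps the invariant true once the sequence reaches `0`; from then on no index is
counted, since a counted index needs `1 ≤ N (d + 1)`. -/
lemma two_pow_card_halvings_mul_le (N : ℕ → ℕ) {a b : ℕ} (hab : a ≤ b)
    (hN : ∀ d, a ≤ d → d < b → N (d + 1) ≤ N d) :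
    2 ^ ((Finset.Ico a b).filter fun d => 1 ≤ N (d + 1) ∧ 2 * N (d + 1) ≤ N d).card
      * max (N b) 1 ≤ max (N a) 1 := by
  induction b, hab using Nat.le_induction with
  | base => simp
  | succ b hab ih =>
    have ih := ih fun d had hdb => hN d had (by omega)
    rw [Nat.Ico_succ_right_eq_insert_Ico hab, Finset.filter_insert]
    split_ifs with hhalf
    · rw [Finset.card_insert_of_notMem (by simp), pow_succ]
      calc 2 ^ _ * 2 * max (N (b + 1)) 1 = 2 ^ _ * (2 * N (b + 1)) := by
            rw [max_eq_left hhalf.1]; ring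
        _ ≤ 2 ^ _ * max (N b) 1 := by gcongr; exact hhalf.2.trans (le_max_left _ _)
        _ ≤ max (N a) 1 := ih
    · calc 2 ^ _ * max (N (b + 1)) 1 ≤ 2 ^ _ * max (N b) 1 := by
            gcongr; exact hN b hab (by omega)
        _ ≤ max (N a) 1 := ih

theorem light_depths_le_log_kg_general (k : ℕ)
    (P : Finset (ℕ × ℕ))
    (x y : ℕ)
    (N : ℕ → ℕ)
    (hN : ∀ d ≤ k, N d = (P.filter fun p =>
        p.1 / 2 ^ (k - d) = x / 2 ^ (k - d) ∧
        p.2 / 2 ^ (k - d) = y / 2 ^ (k - d)).card)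
    (d₀ : ℕ) (hd₀ : d₀ ≤ k) (g : ℕ) (hg : 2 ^ (k - d₀) ≤ g)
    (kg : ℕ)
    (hkg : kg = (P.filter fun p =>
        max |(p.1 : ℤ) - x| |(p.2 : ℤ) - y| < g).card)
    (hkg1 : 1 ≤ kg) :
    ((Finset.Ico d₀ k).filter fun d =>
        1 ≤ N (d + 1) ∧ 2 * N (d + 1) ≤ N d).card ≤ Nat.log 2 kg := by
  have hmono : ∀ d, d₀ ≤ d → d < k → N (d + 1) ≤ N d := fun d _ hdk => by
    rw [hN _ hdk, hN _ hdk.le]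
    have hdvd : 2 ^ (k - (d + 1)) ∣ 2 ^ (k - d) := pow_dvd_pow 2 (by omega)
    exact Finset.card_le_card <| Finset.monotone_filter_right _ fun p _ ⟨hp₁, hp₂⟩ =>
      ⟨Nat.div_eq_div_of_dvd_of_div_eq_div hdvd hp₁,
        Nat.div_eq_div_of_dvd_of_div_eq_div hdvd hp₂⟩
  have hNkg : N d₀ ≤ kg := by
    rw [hN _ hd₀, hkg]
    refine Finset.card_le_card <| Finset.monotone_filter_right _ fun p _ ⟨hp₁, hp₂⟩ => ?_
    have hpos : 0 < 2 ^ (k - d₀) := Nat.two_pow_pos _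
    have hg' : ((2 ^ (k - d₀) : ℕ) : ℤ) ≤ g := by exact_mod_cast hg
    exact max_lt ((Nat.abs_sub_lt_of_div_eq_div hpos hp₁).trans_le hg')
      ((Nat.abs_sub_lt_of_div_eq_div hpos hp₂).trans_le hg')
  have hcount := two_pow_card_halvings_mul_le N hd₀ hmono
  refine Nat.le_log_of_pow_le one_lt_two ?_
  calc _ ≤ 2 ^ _ * max (N k) 1 := Nat.le_mul_of_pos_right _ (by positivity)
    _ ≤ max (N d₀) 1 := hcount
    _ ≤ kg := max_le hNkg hkg1

theorem light_depths_le_log_kg (k : ℕ)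
    (P : Finset (ℕ × ℕ)) (hPne : P.Nonempty)
    (hP : ∀ p ∈ P, p.1 < 2 ^ k ∧ p.2 < 2 ^ k)
    (x y : ℕ) (hx : x < 2 ^ k) (hy : y < 2 ^ k)
    (N : ℕ → ℕ)
    (hN : ∀ d ≤ k, N d = (P.filter fun p =>
        p.1 / 2 ^ (k - d) = x / 2 ^ (k - d) ∧
        p.2 / 2 ^ (k - d) = y / 2 ^ (k - d)).card)
    (d₀ : ℕ) (hd₀ : d₀ ≤ k) (g : ℕ) (hg : 2 ^ (k - d₀) ≤ g)
    (kg : ℕ)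
    (hkg : kg = (P.filter fun p =>
        max |(p.1 : ℤ) - x| |(p.2 : ℤ) - y| < g).card)
    (hkg1 : 1 ≤ kg) :
    ((Finset.Ico d₀ k).filter fun d =>
        1 ≤ N (d + 1) ∧ 2 * N (d + 1) ≤ N d).card ≤ Nat.log 2 kg :=
  light_depths_le_log_kg_general k P x y N hN d₀ hd₀ g hg kg hkg hkg1
end
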